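/- Let H_p denote the non-normalized Walsh–Hadamard transform of ℝ^{2^p}, defined by H₁ = [[1,1],[1,−1]] and H_{p+1} = [[H_p, H_p],[H_p, −H_p]]. In floating-point arithmetic with unit roundoff e, the recursively computed transform satisfies the normwise backward error bound: for all x ∈ ℝ^{2^p}, fl(H_p x) = H_p(x + Δx) with ‖Δx‖ ≤ γ_p ‖x‖, where γ_p = pe/(1 − pe). Consequently, the normalized Hadamard transform H = 2^{−p/2} H_p applied with a final scaling satisfies fl(Hx) = H(x + Δx) with ‖Δx‖ ≤ γ_{p+2}‖x‖. -/

import Mathlib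

open Matrix

/-- Index type for vectors of length `2^p`, built recursively by doubling. -/
def V : ℕ → Type
  | 0 => Unit
  | p + 1 => V p ⊕ V p

instance instFintypeV : ∀ p, Fintype (V p)
  | 0 => inferInstanceAs (Fintype Unit)
  | p + 1 =>
    letI := instFintypeV p
    inferInstanceAs (Fintype (V p ⊕ V p))

/-- Euclidean norm of a finitely supported real vector. -/
noncomputable def eucNorm {k : Type*} [Fintype k] (v : k → ℝ) : ℝ := Real.sqrt (v ⬝ᵥ v)

/-- The exact non-normalized Walsh–Hadamard transform `H_p` of `ℝ^{2^p}`: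
`H₀ = [1]`, `H_{p+1}(x ⊘ y) = (H_p x + H_p y) ⊘ (H_p x - H_p y)`. -/
noncomputable def Hexact : (p : ℕ) → (V p → ℝ) → (V p → ℝ)
  | 0, x => x
  | p + 1, z =>
    Sum.elim
      (fun i => Hexact p (fun a => z (Sum.inl a)) i + Hexact p (fun a => z (Sum.inr a)) i)
      (fun i => Hexact p (fun a => z (Sum.inl a)) i - Hexact p (fun a => z (Sum.inr a)) i)

/-- The quantity `γ_k = k e / (1 - k e)` of worst-case rounding error analysis. -/
noncomputable def gam (e : ℝ) (k : ℕ) : ℝ := k * e / (1 - k * e)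

/-!
`H_p` is `2^{p/2}` times an isometry and `H_p H_p = 2^p I`, so a componentwise relative
perturbation of an output of `H_p` pulls back to an input perturbation of the same relative
size: `(1 + δ) ⊙ H_p w = H_p (w + Δ)` with `Δ = 2^{-p} H_p (δ ⊙ H_p w)` and `‖Δ‖ ≤ e ‖w‖`.
Hence normwise backward errors compose as `(1 + c)(1 + e) - 1`, and a butterfly step keeps the
relative backward error of its two halves because `‖(Δ_L, Δ_R)‖² = ‖Δ_L‖² + ‖Δ_R‖²`. By
induction the computed `H_p x` has relative backward error `(1 + e)^p - 1`; the final scaling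
adds two factors `1 + e`, and `(1 + e)^k - 1 ≤ exp (k e) - 1 ≤ γ_k`.
-/

section eucNorm

variable {k : Type*} [Fintype k]

theorem eucNorm_eq_norm (v : k → ℝ) : eucNorm v = ‖WithLp.toLp 2 v‖ := by
  rw [EuclideanSpace.norm_eq, eucNorm]
  simp only [dotProduct, Real.norm_eq_abs, sq, abs_mul_abs_self]

theorem eucNorm_nonneg (v : k → ℝ) : 0 ≤ eucNorm v := Real.sqrt_nonneg _

theorem sq_eucNorm (v : k → ℝ) : eucNorm v ^ 2 = ∑ i, v i ^ 2 := by
  simp only [eucNorm_eq_norm, EuclideanSpace.norm_sq_eq, Real.norm_eq_abs, sq_abs]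

theorem eucNorm_add_le (u v : k → ℝ) : eucNorm (u + v) ≤ eucNorm u + eucNorm v := by
  simpa only [eucNorm_eq_norm, WithLp.toLp_add] using norm_add_le _ _

theorem eucNorm_smul (c : ℝ) (v : k → ℝ) : eucNorm (c • v) = |c| * eucNorm v := by
  rw [eucNorm_eq_norm, eucNorm_eq_norm, WithLp.toLp_smul, norm_smul, Real.norm_eq_abs]

theorem eucNorm_add_sq_add_eucNorm_sub_sq (u v : k → ℝ) :
    eucNorm (u + v) ^ 2 + eucNorm (u - v) ^ 2 = 2 * (eucNorm u ^ 2 + eucNorm v ^ 2) := by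
  simpa only [eucNorm_eq_norm, WithLp.toLp_add, WithLp.toLp_sub, ← sq]
    using parallelogram_law_with_norm ℝ (WithLp.toLp 2 u) (WithLp.toLp 2 v)

theorem eucNorm_le_mul_of_sq_le {u v : k → ℝ} {K : ℝ} (hK : 0 ≤ K)
    (h : eucNorm u ^ 2 ≤ K ^ 2 * eucNorm v ^ 2) : eucNorm u ≤ K * eucNorm v := by
  rw [← mul_pow] at h
  exact (pow_le_pow_iff_left₀ (eucNorm_nonneg u) (mul_nonneg hK (eucNorm_nonneg v))
    two_ne_zero).1 h

theorem eucNorm_mul_le {δ : k → ℝ} {e : ℝ} (he : 0 ≤ e) (hδ : ∀ i, |δ i| ≤ e) (v : k → ℝ) :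
    eucNorm (δ * v) ≤ e * eucNorm v := by
  refine eucNorm_le_mul_of_sq_le he ?_
  rw [sq_eucNorm, sq_eucNorm, Finset.mul_sum]
  refine Finset.sum_le_sum fun i _ => ?_
  rw [Pi.mul_apply, mul_pow]
  have hδ_sq : δ i ^ 2 ≤ e ^ 2 := by
    simpa only [sq_abs] using pow_le_pow_left₀ (abs_nonneg _) (hδ i) 2
  exact mul_le_mul_of_nonneg_right hδ_sq (sq_nonneg _)

theorem sq_eucNorm_sumElim {l : Type*} [Fintype l] (u : k → ℝ) (v : l → ℝ) :
    eucNorm (Sum.elim u v) ^ 2 = eucNorm u ^ 2 + eucNorm v ^ 2 := by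
  simp only [sq_eucNorm, Fintype.sum_sum_type, Sum.elim_inl, Sum.elim_inr]

end eucNorm

def butterfly {p : ℕ} (u v : V p → ℝ) : V (p + 1) → ℝ := Sum.elim (u + v) (u - v)

theorem Hexact_succ (p : ℕ) (z : V (p + 1) → ℝ) :
    Hexact (p + 1) z =
      butterfly (Hexact p fun a => z (Sum.inl a)) (Hexact p fun a => z (Sum.inr a)) :=
  rfl

theorem sq_eucNorm_butterfly {p : ℕ} (u v : V p → ℝ) :
    eucNorm (butterfly u v) ^ 2 = 2 * (eucNorm u ^ 2 + eucNorm v ^ 2) :=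
  (sq_eucNorm_sumElim (u + v) (u - v)).trans (eucNorm_add_sq_add_eucNorm_sub_sq u v)

theorem sq_eucNorm_V_succ {p : ℕ} (z : V (p + 1) → ℝ) :
    eucNorm z ^ 2 =
      eucNorm (fun a => z (Sum.inl a)) ^ 2 + eucNorm (fun a => z (Sum.inr a)) ^ 2 := by
  simp only [sq_eucNorm]
  exact Fintype.sum_sum_type _

theorem butterfly_add {p : ℕ} (u v u' v' : V p → ℝ) :
    butterfly (u + u') (v + v') = butterfly u v + butterfly u' v' := by
  ext (i | i)
  · exact add_add_add_comm (u i) (u' i) (v i) (v' i)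
  · exact add_sub_add_comm (u i) (u' i) (v i) (v' i)

theorem butterfly_smul {p : ℕ} (c : ℝ) (u v : V p → ℝ) :
    butterfly (c • u) (c • v) = c • butterfly u v := by
  ext (i | i)
  · exact (mul_add c (u i) (v i)).symm
  · exact (mul_sub c (u i) (v i)).symm

theorem isLinearMap_Hexact (p : ℕ) : IsLinearMap ℝ (Hexact p) := by
  induction p with
  | zero => exact ⟨fun _ _ => rfl, fun _ _ => rfl⟩
  | succ p ih =>
    refine ⟨fun x y => ?_, fun c x => ?_⟩
    · exact (congrArg₂ butterfly (ih.map_add _ _) (ih.map_add _ _)).trans (butterfly_add _ _ _ _)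
    · exact (congrArg₂ butterfly (ih.map_smul _ _) (ih.map_smul _ _)).trans (butterfly_smul _ _ _)

theorem Hexact_Hexact (p : ℕ) (x : V p → ℝ) : Hexact p (Hexact p x) = (2 : ℝ) ^ p • x := by
  induction p with
  | zero => exact (one_smul ℝ x).symm
  | succ p ih =>
    have H := isLinearMap_Hexact p
    show butterfly (Hexact p (_ + _)) (Hexact p (_ - _)) = _
    rw [H.map_add, H.map_sub, ih, ih]
    -- `erw`: `Pi.smul_apply` at `V (p + 1)` only accepts `Sum.inl i` after unfolding `V`
    ext (i | i) <;> erw [Pi.smul_apply] <;>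
      simp only [butterfly, Sum.elim_inl, Sum.elim_inr, Pi.add_apply, Pi.sub_apply, Pi.smul_apply,
        smul_eq_mul] <;> ring

theorem sq_eucNorm_Hexact (p : ℕ) (x : V p → ℝ) :
    eucNorm (Hexact p x) ^ 2 = 2 ^ p * eucNorm x ^ 2 := by
  induction p with
  | zero => exact (one_mul _).symm
  | succ p ih =>
    rw [Hexact_succ, sq_eucNorm_butterfly, ih, ih, sq_eucNorm_V_succ x]
    ring

theorem eucNorm_Hexact (p : ℕ) (x : V p → ℝ) : eucNorm (Hexact p x) = √(2 ^ p) * eucNorm x := by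
  rw [← Real.sqrt_sq (eucNorm_nonneg (Hexact p x)), sq_eucNorm_Hexact,
    Real.sqrt_mul (by positivity), Real.sqrt_sq (eucNorm_nonneg x)]

def HasBackwardError (p : ℕ) (c : ℝ) (x y : V p → ℝ) : Prop :=
  ∃ Δx : V p → ℝ, y = Hexact p (x + Δx) ∧ eucNorm Δx ≤ c * eucNorm x

theorem HasBackwardError.mono {p : ℕ} {c c' : ℝ} {x y : V p → ℝ} (h : HasBackwardError p c x y)
    (hc : c ≤ c') : HasBackwardError p c' x y :=
  let ⟨Δx, hy, hΔx⟩ := h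
  ⟨Δx, hy, hΔx.trans (mul_le_mul_of_nonneg_right hc (eucNorm_nonneg x))⟩

theorem hasBackwardError_one_add_mul_Hexact {p : ℕ} {e : ℝ} (he : 0 ≤ e) {δ : V p → ℝ}
    (hδ : ∀ i, |δ i| ≤ e) (w : V p → ℝ) : HasBackwardError p e w ((1 + δ) * Hexact p w) := by
  have h2p : (0 : ℝ) < 2 ^ p := by positivity
  refine ⟨(2 ^ p : ℝ)⁻¹ • Hexact p (δ * Hexact p w), ?_, ?_⟩
  · rw [(isLinearMap_Hexact p).map_add, (isLinearMap_Hexact p).map_smul, Hexact_Hexact,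
      inv_smul_smul₀ h2p.ne', add_mul, one_mul, add_comm]
  · rw [eucNorm_smul, eucNorm_Hexact, abs_of_pos (inv_pos.2 h2p)]
    calc (2 ^ p : ℝ)⁻¹ * (√(2 ^ p) * eucNorm (δ * Hexact p w))
        ≤ (2 ^ p : ℝ)⁻¹ * (√(2 ^ p) * (e * (√(2 ^ p) * eucNorm w))) := by
          gcongr
          exact (eucNorm_mul_le he hδ _).trans_eq (by rw [eucNorm_Hexact])
      _ = e * eucNorm w * ((2 ^ p)⁻¹ * (√(2 ^ p) * √(2 ^ p))) := by ring
      _ = e * eucNorm w := by rw [Real.mul_self_sqrt h2p.le, inv_mul_cancel₀ h2p.ne', mul_one]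

theorem HasBackwardError.one_add_mul {p : ℕ} {c e : ℝ} {x y δ : V p → ℝ}
    (h : HasBackwardError p c x y) (he : 0 ≤ e) (hδ : ∀ i, |δ i| ≤ e) :
    HasBackwardError p ((1 + c) * (1 + e) - 1) x ((1 + δ) * y) := by
  obtain ⟨Δx, rfl, hΔx⟩ := h
  obtain ⟨Δx', hy, hΔx'⟩ := hasBackwardError_one_add_mul_Hexact he hδ (x + Δx)
  refine ⟨Δx + Δx', by rw [hy, add_assoc], ?_⟩
  calc eucNorm (Δx + Δx') ≤ eucNorm Δx + e * eucNorm (x + Δx) :=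
        (eucNorm_add_le _ _).trans (by gcongr)
    _ ≤ c * eucNorm x + e * (eucNorm x + c * eucNorm x) := by
        gcongr
        exact (eucNorm_add_le _ _).trans (by gcongr)
    _ = ((1 + c) * (1 + e) - 1) * eucNorm x := by ring

theorem HasBackwardError.butterfly {p : ℕ} {c : ℝ} (hc : 0 ≤ c) {z : V (p + 1) → ℝ}
    {u v : V p → ℝ} (hu : HasBackwardError p c (fun a => z (.inl a)) u)
    (hv : HasBackwardError p c (fun a => z (.inr a)) v) :
    HasBackwardError (p + 1) c z (butterfly u v) := by
  obtain ⟨Δu, rfl, hΔu⟩ := hu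
  obtain ⟨Δv, rfl, hΔv⟩ := hv
  refine ⟨Sum.elim Δu Δv, rfl, eucNorm_le_mul_of_sq_le hc ?_⟩
  have hu2 := pow_le_pow_left₀ (eucNorm_nonneg _) hΔu 2
  have hv2 := pow_le_pow_left₀ (eucNorm_nonneg _) hΔv 2
  rw [mul_pow] at hu2 hv2
  calc eucNorm (Sum.elim Δu Δv) ^ 2 = eucNorm Δu ^ 2 + eucNorm Δv ^ 2 :=
        sq_eucNorm_sumElim Δu Δv
    _ ≤ c ^ 2 * eucNorm z ^ 2 := by rw [sq_eucNorm_V_succ z]; linarith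

theorem one_add_pow_sub_one_le_gam {e : ℝ} (he : 0 ≤ e) {k : ℕ} (hk : k * e < 1) :
    (1 + e) ^ k - 1 ≤ gam e k := by
  have hpos : 0 < 1 - k * e := by linarith
  have hexp : (1 + e) ^ k ≤ 1 / (1 - k * e) :=
    calc (1 + e) ^ k ≤ Real.exp e ^ k := by gcongr; linarith [Real.add_one_le_exp e]
      _ = Real.exp (k * e) := (Real.exp_nat_mul e k).symm
      _ ≤ 1 / (1 - k * e) := Real.exp_bound_div_one_sub_of_interval (by positivity) hk
  have hgam : gam e k = 1 / (1 - k * e) - 1 := by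
    rw [gam]; field_simp; ring
  linarith

theorem hasBackwardError_Hhat {e : ℝ} (he : 0 ≤ e)
    (Hhat : (p : ℕ) → (V p → ℝ) → (V p → ℝ))
    (hbase : ∀ x : V 0 → ℝ, Hhat 0 x = x)
    (hstep : ∀ p (z : V (p + 1) → ℝ), ∃ δ₁ δ₂ : V p → ℝ,
      (∀ i, |δ₁ i| ≤ e) ∧ (∀ i, |δ₂ i| ≤ e) ∧
      (∀ i : V p, Hhat (p + 1) z (Sum.inl i) =
        (1 + δ₁ i) *
          (Hhat p (fun a => z (Sum.inl a)) i + Hhat p (fun a => z (Sum.inr a)) i)) ∧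
      (∀ i : V p, Hhat (p + 1) z (Sum.inr i) =
        (1 + δ₂ i) *
          (Hhat p (fun a => z (Sum.inl a)) i - Hhat p (fun a => z (Sum.inr a)) i)))
    (p : ℕ) (x : V p → ℝ) : HasBackwardError p ((1 + e) ^ p - 1) x (Hhat p x) := by
  induction p with
  | zero => exact ⟨0, by rw [hbase, add_zero]; rfl, by simp [eucNorm]⟩
  | succ p ih =>
    obtain ⟨δ₁, δ₂, hδ₁, hδ₂, hinl, hinr⟩ := hstep p x
    obtain ⟨δ, hδ, hx⟩ : ∃ δ : V (p + 1) → ℝ, (∀ i, |δ i| ≤ e) ∧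
        Hhat (p + 1) x =
          (1 + δ) * butterfly (Hhat p fun a => x (.inl a)) (Hhat p fun a => x (.inr a)) :=
      ⟨Sum.elim δ₁ δ₂, fun | .inl i => hδ₁ i | .inr i => hδ₂ i,
        funext fun | .inl i => hinl i | .inr i => hinr i⟩
    have hc : (0 : ℝ) ≤ (1 + e) ^ p - 1 := sub_nonneg.2 (one_le_pow₀ (by linarith))
    rw [hx]
    convert ((ih _).butterfly hc (ih _)).one_add_mul he hδ using 1
    ring

/-- any floating-point implementation `Hhat` of the recursive (butterfly)
Walsh–Hadamard transform, with unit roundoff `e`, is normwise backward stable: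
`fl(H_p x) = H_p(x + Δx)` with `‖Δx‖ ≤ γ_p ‖x‖`; and the normalized transform
`H = 2^{-p/2} H_p`, computed with a final scaling costing at most two extra rounding
errors per entry, satisfies `fl(Hx) = H(x + Δx)` with `‖Δx‖ ≤ γ_{p+2} ‖x‖`. -/
theorem hadamard_backward_stable (e : ℝ) (he : 0 ≤ e)
    (Hhat : (p : ℕ) → (V p → ℝ) → (V p → ℝ))
    (hbase : ∀ x : V 0 → ℝ, Hhat 0 x = x)
    (hstep : ∀ p (z : V (p + 1) → ℝ), ∃ δ₁ δ₂ : V p → ℝ,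
      (∀ i, |δ₁ i| ≤ e) ∧ (∀ i, |δ₂ i| ≤ e) ∧
      (∀ i : V p, Hhat (p + 1) z (Sum.inl i) =
        (1 + δ₁ i) *
          (Hhat p (fun a => z (Sum.inl a)) i + Hhat p (fun a => z (Sum.inr a)) i)) ∧
      (∀ i : V p, Hhat (p + 1) z (Sum.inr i) =
        (1 + δ₂ i) *
          (Hhat p (fun a => z (Sum.inl a)) i - Hhat p (fun a => z (Sum.inr a)) i))) :
    (∀ p : ℕ, (p : ℝ) * e < 1 → ∀ x : V p → ℝ, ∃ Δx : V p → ℝ,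
        Hhat p x = Hexact p (x + Δx) ∧ eucNorm Δx ≤ gam e p * eucNorm x) ∧
    (∀ p : ℕ, ((p : ℝ) + 2) * e < 1 → ∀ x : V p → ℝ, ∀ δ₀ : ℝ, |δ₀| ≤ e →
      ∀ δ' : V p → ℝ, (∀ i, |δ' i| ≤ e) →
        ∃ Δx : V p → ℝ,
          (fun i => (1 + δ' i) * ((1 + δ₀) * (2 : ℝ) ^ (-(p : ℝ) / 2)) * Hhat p x i) =
            (fun i => (2 : ℝ) ^ (-(p : ℝ) / 2) * Hexact p (x + Δx) i) ∧
          eucNorm Δx ≤ gam e (p + 2) * eucNorm x) := by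
  have hHhat := hasBackwardError_Hhat he Hhat hbase hstep
  refine ⟨fun p hp x => (hHhat p x).mono (one_add_pow_sub_one_le_gam he hp), ?_⟩
  intro p hp x δ₀ hδ₀ δ' hδ'
  have hscaled : HasBackwardError p ((1 + e) ^ (p + 2) - 1) x
      ((1 + δ') * ((1 + fun _ => δ₀) * Hhat p x)) := by
    convert ((hHhat p x).one_add_mul he fun _ => hδ₀).one_add_mul he hδ' using 1
    ring
  obtain ⟨Δx, hy, hΔx⟩ := hscaled.mono (one_add_pow_sub_one_le_gam he (by push_cast; linarith))
  refine ⟨Δx, funext fun i => ?_, hΔx⟩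
  rw [← congrFun hy i]
  simp only [Pi.mul_apply, Pi.add_apply, Pi.one_apply]
  ring
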